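/- Let 𝒜 = ⟨A,R⟩ be an almost bounded structure, s,t ∈ A, and let u,v be non-principal ultrafilters on A. Then: (i) R^ue(π_s,π_t) iff S^ue(π_s,π_t) or P^ue(π_s,π_t); (ii) R^ue(π_s,u) iff P^ue(π_s,u), and R^ue(u,π_s) iff P^ue(u,π_s); (iii) R^ue(u,v) iff S^ue(u,v). -/

import Mathlib

open FirstOrder Cardinal

namespace UEx

/-- Elements of infinite in- or out-degree. -/
def RInf (R : A → A → Prop) : Set A :=
  {w | {v | R w v}.Infinite ∨ {v | R v w}.Infinite}

/-- A uniform finite bound on all in- and out-degrees. -/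
def Bounded (R : A → A → Prop) : Prop :=
  ∃ n : ℕ, ∀ w : A, {v | R w v}.Finite ∧ {v | R v w}.Finite ∧
    {v | R w v}.ncard ≤ n ∧ {v | R v w}.ncard ≤ n

/-- Almost bounded: finitely many elements of infinite degree, and a uniform
finite bound on the degrees of the remaining elements. -/
def AlmostBounded (R : A → A → Prop) : Prop :=
  (RInf R).Finite ∧ ∃ n : ℕ, ∀ w ∉ RInf R,
    {v | R w v}.ncard ≤ n ∧ {v | R v w}.ncard ≤ n

/-- P = {(s,t) ∈ R : s ∈ R∞ or t ∈ R∞}. -/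
def PRel (R : A → A → Prop) (s t : A) : Prop := R s t ∧ (s ∈ RInf R ∨ t ∈ RInf R)

/-- S = R \ P. -/
def SRel (R : A → A → Prop) (s t : A) : Prop := R s t ∧ ¬(s ∈ RInf R ∨ t ∈ RInf R)

/-- The ultrafilter extension of a binary relation. -/
def ueRel (Q : A → A → Prop) (u v : Ultrafilter A) : Prop :=
  ∀ X ∈ v, {w | ∃ s ∈ X, Q w s} ∈ u

lemma ue_mono {A : Type*} {Q Q' : A → A → Prop} (hQQ : ∀ a b, Q a b → Q' a b)
    {u v : Ultrafilter A} (h : ueRel Q u v) : ueRel Q' u v := by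
  intro X hX
  exact Filter.mem_of_superset (h X hX) (fun w ⟨x, hx, hq⟩ => ⟨x, hx, hQQ _ _ hq⟩)

lemma ue_pure_pure {A : Type*} (Q : A → A → Prop) (s t : A) :
    ueRel Q (pure s) (pure t) ↔ Q s t := by
  constructor
  · intro h
    have := h {t} (by simp)
    simpa using this
  · intro hq X hX
    exact ⟨t, hX, hq⟩

lemma ue_pure_left {A : Type*} (Q : A → A → Prop) (s : A) (u : Ultrafilter A) :
    ueRel Q (pure s) u ↔ {x | Q s x} ∈ u := by
  constructor
  · intro h
    by_contra hn
    have hc : {x | Q s x}ᶜ ∈ u := Ultrafilter.compl_mem_iff_notMem.mpr hn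
    have := h _ hc
    simp only [Ultrafilter.mem_pure, Filter.mem_pure, Set.mem_setOf_eq] at this
    obtain ⟨x, hx, hq⟩ := this
    exact hx hq
  · intro hm X hX
    obtain ⟨x, hx1, hx2⟩ := Ultrafilter.nonempty_of_mem (u.inter_mem hX hm)
    exact Filter.mem_pure.mpr ⟨x, hx1, hx2⟩

lemma ue_pure_right {A : Type*} (Q : A → A → Prop) (s : A) (u : Ultrafilter A) :
    ueRel Q u (pure s) ↔ {w | Q w s} ∈ u := by
  constructor
  · intro h
    have := h {s} (by simp)
    simpa using this
  · intro hm X hX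
    exact Filter.mem_of_superset hm (fun w hw => ⟨s, hX, hw⟩)

lemma finite_not_mem {A : Type*} {u : Ultrafilter A} (hu : ∀ w : A, u ≠ pure w)
    {F : Set A} (hF : F.Finite) : F ∉ u := by
  intro hmem
  obtain ⟨a, _, ha⟩ := Ultrafilter.eq_pure_of_finite_mem hF hmem
  exact hu a ha

/-- The decomposition `R = S ∪ P` is coherent with the ultrafilter extension:
(i) between principal ultrafilters `R^ue` is `S^ue ∪ P^ue`; (ii) between a principal
and a non-principal ultrafilter it is `P^ue`; (iii) between non-principal
ultrafilters it is `S^ue`. -/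
theorem prop_iso_ue {A : Type*} (R : A → A → Prop) (h : AlmostBounded R)
    (s t : A) (u v : Ultrafilter A)
    (hu : ∀ w : A, u ≠ pure w) (hv : ∀ w : A, v ≠ pure w) :
    (ueRel R (pure s) (pure t) ↔
      ueRel (SRel R) (pure s) (pure t) ∨ ueRel (PRel R) (pure s) (pure t)) ∧
    (ueRel R (pure s) u ↔ ueRel (PRel R) (pure s) u) ∧
    (ueRel R u (pure s) ↔ ueRel (PRel R) u (pure s)) ∧
    (ueRel R u v ↔ ueRel (SRel R) u v) := by
  refine ⟨?_, ?_, ?_, ?_⟩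
  · rw [ue_pure_pure, ue_pure_pure, ue_pure_pure, SRel, PRel]
    by_cases hc : s ∈ RInf R ∨ t ∈ RInf R <;> tauto
  · rw [ue_pure_left, ue_pure_left]
    constructor
    · intro hm
      have hsinf : s ∈ RInf R := by
        left
        by_contra hfin
        rw [Set.not_infinite] at hfin
        exact finite_not_mem hu hfin hm
      exact Filter.mem_of_superset hm (fun x hx => ⟨hx, Or.inl hsinf⟩)
    · intro hm
      exact Filter.mem_of_superset hm (fun x hx => hx.1)
  · rw [ue_pure_right, ue_pure_right]
    constructor
    · intro hm
      have hsinf : s ∈ RInf R := by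
        right
        by_contra hfin
        rw [Set.not_infinite] at hfin
        exact finite_not_mem hu hfin hm
      exact Filter.mem_of_superset hm (fun x hx => ⟨hx, Or.inr hsinf⟩)
    · intro hm
      exact Filter.mem_of_superset hm (fun x hx => hx.1)
  · constructor
    · intro hR X hX
      have hFc_v : (RInf R)ᶜ ∈ v :=
        Ultrafilter.compl_mem_iff_notMem.mpr (finite_not_mem hv h.1)
      have hFc_u : (RInf R)ᶜ ∈ u :=
        Ultrafilter.compl_mem_iff_notMem.mpr (finite_not_mem hu h.1)
      have hX' : X ∩ (RInf R)ᶜ ∈ v := v.inter_mem hX hFc_v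
      have hmem : {w | ∃ x ∈ X ∩ (RInf R)ᶜ, R w x} ∩ (RInf R)ᶜ ∈ u :=
        u.inter_mem (hR _ hX') hFc_u
      refine Filter.mem_of_superset hmem ?_
      rintro w ⟨⟨x, ⟨hxX, hxF⟩, hr⟩, hwF⟩
      exact ⟨x, hxX, hr, fun hor => hor.elim hwF hxF⟩
    · exact ue_mono (fun a b hab => hab.1)

end UEx
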